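/- arXiv:2005.11601 — 2 statements merged into one kernel-verified Lean document; each statement's English description precedes it below -/
import Mathlib

section
/- Let k ≥ 1 be an integer and n = 8k+2, let a, b, c be the generators of the Weierstrass group W_n, and set A = a·b·c = [[1, −8k−4], [0, 1]]. Then the element γ = c·A^{4k−1}·a·b·a·b·a·A^{−(k−1)}·c·a of W_{8k+2} satisfies |tr γ| > 2, and both (2, 8k+1) and (−8k−2, 4k+3) are eigenvectors of γ. Hence γ is a hyperbolic element of W_{8k+2} whose fixed points on the boundary are the rational numbers 2/(8k+1) and (−8k−2)/(4k+3), i.e. a special element of W_{8k+2}. -/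
noncomputable section

open Matrix

abbrev SL2R := Matrix.SpecialLinearGroup (Fin 2) ℝ

/-- Generator `a` of the Weierstrass groups. -/
def Wa : SL2R := ⟨!![1, 2; -1, -1], by norm_num [Matrix.det_fin_two_of]⟩

/-- Generator `b = √n · [[1,1],[-(n+1)/n,-1]]` of the `n`-th Weierstrass group. -/
def Wb (n : ℕ) (hn : 0 < n) : SL2R :=
  ⟨Real.sqrt n • !![1, 1; -((n : ℝ) + 1) / n, -1], by
    have h0 : (0:ℝ) ≤ n := Nat.cast_nonneg n
    have hne : (n : ℝ) ≠ 0 := Nat.cast_ne_zero.mpr hn.ne'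
    have h : Real.sqrt n ^ 2 = n := Real.sq_sqrt h0
    rw [Matrix.det_smul]
    simp only [Matrix.det_fin_two_of, Fintype.card_fin]
    field_simp
    rw [h]; ring⟩

/-- Generator `c = (1/√n) · [[0,n],[-1,0]]` of the `n`-th Weierstrass group. -/
def Wc (n : ℕ) (hn : 0 < n) : SL2R :=
  ⟨(1 / Real.sqrt n) • !![0, (n : ℝ); -1, 0], by
    have h0 : (0:ℝ) ≤ n := Nat.cast_nonneg n
    have hne : (n : ℝ) ≠ 0 := Nat.cast_ne_zero.mpr hn.ne'
    have h : Real.sqrt n ^ 2 = n := Real.sq_sqrt h0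
    have hs : Real.sqrt n ≠ 0 := by
      intro hs; rw [hs] at h; simp at h; exact hne h.symm
    rw [Matrix.det_smul]
    simp only [Matrix.det_fin_two_of, Fintype.card_fin]
    field_simp
    rw [h]; ring⟩

/-- The `n`-th Weierstrass group. -/
def W (n : ℕ) (hn : 0 < n) : Subgroup SL2R :=
  Subgroup.closure {Wa, Wb n hn, Wc n hn}

/-- `γ` fixes the boundary point `x ∈ ℝ`: `(x,1)` is an eigenvector of `γ`. -/
def FixesBoundary (γ : SL2R) (x : ℝ) : Prop :=
  ∃ t : ℝ, t ≠ 0 ∧ (γ : Matrix (Fin 2) (Fin 2) ℝ).mulVec ![x, 1] = t • ![x, 1]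

/-- `γ` fixes the boundary point `∞`: `(1,0)` is an eigenvector of `γ`. -/
def FixesInfty (γ : SL2R) : Prop :=
  ∃ t : ℝ, t ≠ 0 ∧ (γ : Matrix (Fin 2) (Fin 2) ℝ).mulVec ![1, 0] = t • ![1, 0]

/-- `γ ∈ SL(2,ℝ)` is parabolic: `γ ≠ ±1` and `|tr γ| = 2`. -/
def IsParabolic (γ : SL2R) : Prop :=
  γ ≠ 1 ∧ γ ≠ -1 ∧ |Matrix.trace (γ : Matrix (Fin 2) (Fin 2) ℝ)| = 2

/-- `γ ∈ SL(2,ℝ)` is hyperbolic: `|tr γ| > 2`. -/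
def IsHyperbolic (γ : SL2R) : Prop :=
  2 < |Matrix.trace (γ : Matrix (Fin 2) (Fin 2) ℝ)|

/-- The element `γ = c·A^{4k−1}·a·b·a·b·a·A^{−(k−1)}·c·a` of the Weierstrass group
`W_{8k+2}`, where `A = a·b·c`. -/
def specialW8k2 (k : ℕ) (hk : 1 ≤ k) : SL2R :=
  Wc (8 * k + 2) (by omega) *
    (Wa * Wb (8 * k + 2) (by omega) * Wc (8 * k + 2) (by omega)) ^ (4 * k - 1) *
    Wa * Wb (8 * k + 2) (by omega) * Wa * Wb (8 * k + 2) (by omega) * Wa *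
    (Wa * Wb (8 * k + 2) (by omega) * Wc (8 * k + 2) (by omega)) ^ (-((k : ℤ) - 1)) *
    Wc (8 * k + 2) (by omega) * Wa

/-! The product `a·b·c` is the translation `z ↦ z − (n+2)`, so the powers of `A` are explicit
shears. The remaining generators occur in `γ` only through `a·b·a·b·a` and `c·(…)·c`, in which the
factors `√n` cancel, so `γ` is an explicit matrix with entries in `ℚ(k)`. It has eigenvalues
`(4k+1)²` and `(4k+1)⁻²` with eigenvectors `(2, 8k+1)` and `(−8k−2, 4k+3)`, whence
`tr γ = (4k+1)² + (4k+1)⁻² > 2`. -/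

def shear (x : ℝ) : SL2R := ⟨!![1, x; 0, 1], by simp [Matrix.det_fin_two_of]⟩

lemma coe_shear (x : ℝ) : (shear x : Matrix (Fin 2) (Fin 2) ℝ) = !![1, x; 0, 1] := rfl

lemma shear_zero : shear 0 = 1 := by
  ext i j
  fin_cases i <;> fin_cases j <;> rfl

lemma shear_add (x y : ℝ) : shear (x + y) = shear x * shear y := by
  ext : 1
  simp [coe_shear, add_comm]

lemma shear_zpow (x : ℝ) (z : ℤ) : shear x ^ z = shear (z * x) := by
  induction z using Int.induction_on with
  | zero => simp [shear_zero]
  | succ m ih => rw [_root_.zpow_add_one, ih, ← shear_add]; push_cast; ring_nf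
  | pred m ih =>
    rw [_root_.zpow_sub_one, ih, mul_inv_eq_iff_eq_mul, ← shear_add]; push_cast; ring_nf

section WeierstrassGenerators

variable {n : ℕ} (hn : 0 < n)

lemma coe_Wa : (Wa : Matrix (Fin 2) (Fin 2) ℝ) = !![1, 2; -1, -1] := rfl

lemma coe_Wb : (Wb n hn : Matrix (Fin 2) (Fin 2) ℝ) =
    Real.sqrt n • !![1, 1; -((n : ℝ) + 1) / n, -1] := rfl

lemma coe_Wc : (Wc n hn : Matrix (Fin 2) (Fin 2) ℝ) =
    (1 / Real.sqrt n) • !![0, (n : ℝ); -1, 0] := rfl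

lemma Wa_mul_Wb_mul_Wc : Wa * Wb n hn * Wc n hn = shear (-(n + 2)) := by
  have hn' : (n : ℝ) ≠ 0 := by positivity
  ext i j
  simp only [Matrix.SpecialLinearGroup.coe_mul, coe_Wa, coe_Wb, coe_Wc, coe_shear,
    smul_mul_assoc, mul_smul_comm, smul_smul, one_div_mul_cancel (by positivity : Real.sqrt (n : ℝ) ≠ 0),
    one_smul]
  fin_cases i <;> fin_cases j <;> simp [Matrix.mul_apply, Fin.sum_univ_two] <;> field_simp <;> ring

lemma coe_Wa_mul_Wb_mul_Wa_mul_Wb_mul_Wa :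
    ((Wa * Wb n hn * Wa * Wb n hn * Wa : SL2R) : Matrix (Fin 2) (Fin 2) ℝ) =
      !![((n : ℝ) + 4) / n, ((n : ℝ) ^ 2 + 4 * n + 8) / n; -2 / n, -((n : ℝ) + 4) / n] := by
  have hn' : (n : ℝ) ≠ 0 := by positivity
  simp only [Matrix.SpecialLinearGroup.coe_mul, coe_Wa, coe_Wb,
    smul_mul_assoc, mul_smul_comm, smul_smul, Real.mul_self_sqrt n.cast_nonneg]
  ext i j
  fin_cases i <;> fin_cases j <;> simp <;> field_simp <;> ring

lemma coe_Wc_mul_mul_Wc (g : SL2R) :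
    ((Wc n hn * g * Wc n hn : SL2R) : Matrix (Fin 2) (Fin 2) ℝ) =
      !![-g 1 1, n * g 1 0; g 0 1 / n, -g 0 0] := by
  have hn' : (n : ℝ) ≠ 0 := by positivity
  simp only [Matrix.SpecialLinearGroup.coe_mul, coe_Wc,
    smul_mul_assoc, mul_smul_comm, smul_smul, one_div_mul_one_div,
    Real.mul_self_sqrt n.cast_nonneg]
  ext i j
  fin_cases i <;> fin_cases j <;>
    simp [Matrix.mul_apply, Fin.sum_univ_two, Matrix.vecMul, dotProduct] <;> field_simp

end WeierstrassGenerators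

section SpecialElement

variable (k : ℕ) (hk : 1 ≤ k)

lemma specialW8k2_eq_Wc_mul_mul_Wc_mul_Wa :
    specialW8k2 k hk = Wc (8 * k + 2) (by omega) *
      (shear (-(8 * k + 4) * (4 * k - 1)) *
        (Wa * Wb (8 * k + 2) (by omega) * Wa * Wb (8 * k + 2) (by omega) * Wa) *
        shear ((8 * k + 4) * (k - 1))) * Wc (8 * k + 2) (by omega) * Wa := by
  have h4k : ((4 * k - 1 : ℕ) : ℝ) = 4 * k - 1 := by
    rw [Nat.cast_sub (by omega)]; push_cast; ring
  have hpow : (Wa * Wb (8 * k + 2) (by omega) * Wc (8 * k + 2) (by omega)) ^ (4 * k - 1) =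
      shear (-(8 * k + 4) * (4 * k - 1)) := by
    rw [Wa_mul_Wb_mul_Wc, ← zpow_natCast, shear_zpow]
    push_cast [h4k]
    ring_nf
  have hzpow : (Wa * Wb (8 * k + 2) (by omega) * Wc (8 * k + 2) (by omega)) ^ (-((k : ℤ) - 1)) =
      shear ((8 * k + 4) * (k - 1)) := by
    rw [Wa_mul_Wb_mul_Wc, shear_zpow]
    push_cast
    ring_nf
  rw [specialW8k2, hpow, hzpow]
  simp only [mul_assoc]

lemma coe_specialW8k2 :
    ((specialW8k2 k hk : SL2R) : Matrix (Fin 2) (Fin 2) ℝ) =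
      !![(8 * (k : ℝ) ^ 2 + 8 * k + 1) / (4 * k + 1), (16 * (k : ℝ) ^ 2 + 8 * k) / (4 * k + 1);
         (2 * (k : ℝ) * (2 * k + 1) * (8 * k + 1) * (4 * k + 3)) / (4 * k + 1) ^ 2,
         (256 * (k : ℝ) ^ 4 + 224 * (k : ℝ) ^ 3 + 56 * (k : ℝ) ^ 2 + 4 * k + 1) /
           (4 * k + 1) ^ 2] := by
  have hm : (4 * k + 1 : ℝ) ≠ 0 := by positivity
  rw [specialW8k2_eq_Wc_mul_mul_Wc_mul_Wa, Matrix.SpecialLinearGroup.coe_mul, coe_Wc_mul_mul_Wc,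
    Matrix.SpecialLinearGroup.coe_mul, Matrix.SpecialLinearGroup.coe_mul, coe_shear, coe_shear,
    coe_Wa_mul_Wb_mul_Wa_mul_Wb_mul_Wa, coe_Wa]
  ext i j
  fin_cases i <;> fin_cases j <;> simp [Matrix.mul_apply, Fin.sum_univ_two] <;> field_simp <;> ring

end SpecialElement

lemma two_lt_add_inv_self {t : ℝ} (ht : 1 < t) : 2 < t + t⁻¹ := by
  have ht0 : 0 < t := by linarith
  have : 0 < (t - 1) ^ 2 / t := div_pos (by nlinarith) ht0
  calc 2 < 2 + (t - 1) ^ 2 / t := by linarith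
    _ = t + t⁻¹ := by field_simp; ring

lemma fixesBoundary_of_mulVec_eq_smul (γ : SL2R) {u v t : ℝ} (hv : v ≠ 0) (ht : t ≠ 0)
    (h : (γ : Matrix (Fin 2) (Fin 2) ℝ).mulVec ![u, v] = t • ![u, v]) :
    FixesBoundary γ (u / v) := by
  have hvec : (![u / v, 1] : Fin 2 → ℝ) = v⁻¹ • ![u, v] := by
    ext i
    fin_cases i <;> simp [div_eq_inv_mul, hv]
  exact ⟨t, ht, by rw [hvec, Matrix.mulVec_smul, h, smul_comm]⟩

section SpecialElement

variable (k : ℕ) (hk : 1 ≤ k)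

lemma specialW8k2_mulVec_attracting :
    ((specialW8k2 k hk : SL2R) : Matrix (Fin 2) (Fin 2) ℝ).mulVec ![2, 8 * (k : ℝ) + 1] =
      ((4 * (k : ℝ) + 1) ^ 2) • ![2, 8 * (k : ℝ) + 1] := by
  have hm : (4 * k + 1 : ℝ) ≠ 0 := by positivity
  rw [coe_specialW8k2]
  ext i
  fin_cases i <;> simp [Matrix.mulVec, dotProduct, Fin.sum_univ_two] <;> field_simp <;> ring

lemma specialW8k2_mulVec_repelling :
    ((specialW8k2 k hk : SL2R) : Matrix (Fin 2) (Fin 2) ℝ).mulVec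
        ![-8 * (k : ℝ) - 2, 4 * (k : ℝ) + 3] =
      ((4 * (k : ℝ) + 1) ^ 2)⁻¹ • ![-8 * (k : ℝ) - 2, 4 * (k : ℝ) + 3] := by
  have hm : (4 * k + 1 : ℝ) ≠ 0 := by positivity
  rw [coe_specialW8k2]
  ext i
  fin_cases i <;> simp [Matrix.mulVec, dotProduct, Fin.sum_univ_two] <;> field_simp <;> ring

lemma trace_specialW8k2 :
    Matrix.trace ((specialW8k2 k hk : SL2R) : Matrix (Fin 2) (Fin 2) ℝ) =
      (4 * (k : ℝ) + 1) ^ 2 + ((4 * (k : ℝ) + 1) ^ 2)⁻¹ := by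
  have hm : (4 * k + 1 : ℝ) ≠ 0 := by positivity
  rw [coe_specialW8k2, Matrix.trace_fin_two_of]
  field_simp
  ring

lemma isHyperbolic_specialW8k2 : IsHyperbolic (specialW8k2 k hk) := by
  have hk' : (1 : ℝ) ≤ k := by exact_mod_cast hk
  rw [_root_.IsHyperbolic, trace_specialW8k2, abs_of_pos (by positivity)]
  exact two_lt_add_inv_self (by nlinarith)

lemma specialW8k2_mem_W : specialW8k2 k hk ∈ W (8 * k + 2) (by omega) := by
  have ha : Wa ∈ W (8 * k + 2) (by omega) := Subgroup.subset_closure (by simp)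
  have hb : Wb (8 * k + 2) (by omega) ∈ W (8 * k + 2) (by omega) :=
    Subgroup.subset_closure (by simp)
  have hc : Wc (8 * k + 2) (by omega) ∈ W (8 * k + 2) (by omega) :=
    Subgroup.subset_closure (by simp)
  unfold specialW8k2
  apply_rules [mul_mem, pow_mem, zpow_mem]

end SpecialElement

/-- For `k ≥ 1` and `n = 8k+2`: `A = a·b·c = [[1, −8k−4], [0, 1]]`, and
`γ = c·A^{4k−1}·a·b·a·b·a·A^{−(k−1)}·c·a` satisfies `|tr γ| > 2` and has
eigenvectors `(2, 8k+1)` and `(−8k−2, 4k+3)`; hence `γ` is a special (hyperbolic)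
element of `W_{8k+2}` fixing the rationals `2/(8k+1)` and `(−8k−2)/(4k+3)`. -/
theorem weierstrass_8k2_special (k : ℕ) (hk : 1 ≤ k) :
    (Wa * Wb (8 * k + 2) (by omega) * Wc (8 * k + 2) (by omega) =
      (⟨!![1, -8 * (k : ℝ) - 4; 0, 1], by norm_num [Matrix.det_fin_two_of]⟩ : SL2R)) ∧
    2 < |Matrix.trace ((specialW8k2 k hk : SL2R) : Matrix (Fin 2) (Fin 2) ℝ)| ∧
    (∃ t : ℝ, t ≠ 0 ∧
      ((specialW8k2 k hk : SL2R) : Matrix (Fin 2) (Fin 2) ℝ).mulVec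
          ![2, 8 * (k : ℝ) + 1] = t • ![2, 8 * (k : ℝ) + 1]) ∧
    (∃ t : ℝ, t ≠ 0 ∧
      ((specialW8k2 k hk : SL2R) : Matrix (Fin 2) (Fin 2) ℝ).mulVec
          ![-8 * (k : ℝ) - 2, 4 * (k : ℝ) + 3] = t • ![-8 * (k : ℝ) - 2, 4 * (k : ℝ) + 3]) ∧
    IsHyperbolic (specialW8k2 k hk) ∧
    FixesBoundary (specialW8k2 k hk) (2 / (8 * (k : ℝ) + 1)) ∧
    FixesBoundary (specialW8k2 k hk) ((-8 * (k : ℝ) - 2) / (4 * (k : ℝ) + 3)) ∧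
    specialW8k2 k hk ∈ W (8 * k + 2) (by omega) := by
  have hA : Wa * Wb (8 * k + 2) (by omega) * Wc (8 * k + 2) (by omega) =
      (⟨!![1, -8 * (k : ℝ) - 4; 0, 1], by norm_num [Matrix.det_fin_two_of]⟩ : SL2R) := by
    rw [Wa_mul_Wb_mul_Wc]
    ext i j
    fin_cases i <;> fin_cases j <;> simp [coe_shear]
    ring
  have hev : (4 * (k : ℝ) + 1) ^ 2 ≠ 0 := by positivity
  have hattr := specialW8k2_mulVec_attracting k hk
  have hrep := specialW8k2_mulVec_repelling k hk
  exact ⟨hA, isHyperbolic_specialW8k2 k hk, ⟨_, hev, hattr⟩, ⟨_, inv_ne_zero hev, hrep⟩,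
    isHyperbolic_specialW8k2 k hk,
    fixesBoundary_of_mulVec_eq_smul _ (by positivity) hev hattr,
    fixesBoundary_of_mulVec_eq_smul _ (by positivity) (inv_ne_zero hev) hrep,
    specialW8k2_mem_W k hk⟩
end
end

section
/- For every integer n > 2 with n ≡ 0, 2, or 6 (mod 8), the Weierstrass group W_n contains a special element: there exists γ ∈ W_n with |tr γ| > 2 and a rational number x such that (x, 1) is an eigenvector of γ. -/
noncomputable section

open Matrix

/-
With `P = ab` and `Q = ac`, the product `T = abc` is the shear `z ↦ z - (n + 2)`, so
`γₖ = Tᵏ P² Q² ∈ W_n` has rational entries, a bottom row independent of `k`, and trace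
`(6n² + 16n + 16 + 4k(n + 2)²) / n²`, affine in `k`. If `(x, 1)` is an eigenvector of an element of
`SL(2, ℝ)` with eigenvalue `λ`, the determinant forces its trace to be `λ + λ⁻¹`, so it is
hyperbolic as soon as `|λ| ≠ 1`. It remains to choose `k` so that `γₖ` has a rational eigenvalue:
for `n = 8m`, `k = -(m + 1)` gives `λ = -1/(4m)` at `x = 6m`; for `n = 4j + 2`, `k = j² - 1` gives
`λ = 1/(2j + 1)²` at `x = 3j + 1`.
-/

open Matrix.SpecialLinearGroup

lemma two_lt_abs_add_inv {t : ℝ} (h0 : t ≠ 0) (h1 : |t| ≠ 1) : 2 < |t + t⁻¹| := by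
  have hpos : 0 < |t| := abs_pos.mpr h0
  have hsq : 0 < (|t| - 1) ^ 2 := by
    have : |t| - 1 ≠ 0 := sub_ne_zero.mpr h1
    positivity
  calc 2 < (|t| ^ 2 + 1) / |t| := by rw [lt_div_iff₀ hpos]; nlinarith
    _ = |t + t⁻¹| := by
      rw [show t + t⁻¹ = (t ^ 2 + 1) / t by field_simp, abs_div, sq_abs,
        abs_of_pos (by positivity : (0 : ℝ) < t ^ 2 + 1)]

section Eigenvector

variable {γ : SL2R} {x t : ℝ}

lemma rows_of_mulVec_eq (h : (γ : Matrix (Fin 2) (Fin 2) ℝ) *ᵥ ![x, 1] = t • ![x, 1]) :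
    γ 0 0 * x + γ 0 1 = t * x ∧ γ 1 0 * x + γ 1 1 = t := by
  have h0 := congrFun h 0
  have h1 := congrFun h 1
  simp only [mulVec, dotProduct, Fin.sum_univ_two, cons_val_zero, cons_val_one,
    Pi.smul_apply, smul_eq_mul, mul_one] at h0 h1
  exact ⟨h0, h1⟩

lemma mul_sub_eq_one_of_mulVec_eq (h : (γ : Matrix (Fin 2) (Fin 2) ℝ) *ᵥ ![x, 1] = t • ![x, 1]) :
    t * (γ 0 0 - γ 1 0 * x) = 1 := by
  obtain ⟨h0, h1⟩ := rows_of_mulVec_eq h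
  have hdet := γ.det_coe
  rw [det_fin_two] at hdet
  linear_combination γ 1 0 * h0 - γ 0 0 * h1 + hdet

lemma trace_eq_add_inv_of_mulVec_eq (h : (γ : Matrix (Fin 2) (Fin 2) ℝ) *ᵥ ![x, 1] = t • ![x, 1]) :
    trace (γ : Matrix (Fin 2) (Fin 2) ℝ) = t + t⁻¹ := by
  have hinv : γ 0 0 - γ 1 0 * x = t⁻¹ := eq_inv_of_mul_eq_one_right (mul_sub_eq_one_of_mulVec_eq h)
  rw [trace_fin_two]
  linear_combination (rows_of_mulVec_eq h).2 + hinv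

lemma FixesBoundary.of_mulVec_eq (h : (γ : Matrix (Fin 2) (Fin 2) ℝ) *ᵥ ![x, 1] = t • ![x, 1]) :
    FixesBoundary γ x :=
  ⟨t, left_ne_zero_of_mul_eq_one (mul_sub_eq_one_of_mulVec_eq h), h⟩

lemma IsHyperbolic.of_mulVec_eq (h : (γ : Matrix (Fin 2) (Fin 2) ℝ) *ᵥ ![x, 1] = t • ![x, 1])
    (ht : |t| ≠ 1) : IsHyperbolic γ := by
  unfold _root_.IsHyperbolic
  rw [trace_eq_add_inv_of_mulVec_eq h]
  exact two_lt_abs_add_inv (left_ne_zero_of_mul_eq_one (mul_sub_eq_one_of_mulVec_eq h)) ht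

lemma exists_special_of_mulVec_eq {G : Subgroup SL2R} (hγ : γ ∈ G) {q : ℚ}
    (h : (γ : Matrix (Fin 2) (Fin 2) ℝ) *ᵥ ![(q : ℝ), 1] = t • ![(q : ℝ), 1]) (ht : |t| ≠ 1) :
    ∃ γ ∈ G, IsHyperbolic γ ∧ ∃ x : ℚ, FixesBoundary γ (x : ℝ) :=
  ⟨γ, hγ, IsHyperbolic.of_mulVec_eq h ht, q, FixesBoundary.of_mulVec_eq h⟩

end Eigenvector

lemma coe_zpow_of_coe_eq_shear {g : SL2R} {s : ℝ}
    (hg : (g : Matrix (Fin 2) (Fin 2) ℝ) = !![1, s; 0, 1]) (k : ℤ) :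
    ((g ^ k : SL2R) : Matrix (Fin 2) (Fin 2) ℝ) = !![1, k * s; 0, 1] := by
  induction k using Int.induction_on with
  | zero => simp [one_fin_two]
  | succ k ih =>
    rw [_root_.zpow_add_one g, coe_mul, ih, hg, mul_fin_two]
    simp only [mul_one, one_mul, mul_zero, zero_mul, add_zero, zero_add]
    push_cast
    ring_nf
  | pred k ih =>
    rw [_root_.zpow_sub_one g, coe_mul, ih, coe_inv, hg, adjugate_fin_two_of, mul_fin_two]
    simp only [mul_one, one_mul, mul_zero, zero_mul, add_zero, zero_add, neg_zero]
    push_cast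
    ring_nf

section Weierstrass

variable {n : ℕ} (hn : 0 < n)

lemma Wa_mem_W : Wa ∈ W n hn := Subgroup.subset_closure (by simp)

lemma Wb_mem_W : Wb n hn ∈ W n hn := Subgroup.subset_closure (by simp)

lemma Wc_mem_W : Wc n hn ∈ W n hn := Subgroup.subset_closure (by simp)

lemma coe_Wa_mul_Wb : ((Wa * Wb n hn : SL2R) : Matrix (Fin 2) (Fin 2) ℝ)
    = √n • !![-((n : ℝ) + 2) / n, -1; 1 / n, 0] := by
  have hn' : (n : ℝ) ≠ 0 := by positivity
  rw [coe_mul, Wa, Wb, mul_smul_comm, mul_fin_two]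
  congr 1
  ext i j
  fin_cases i <;> fin_cases j <;> simp <;> field_simp <;> ring

lemma coe_Wa_mul_Wc : ((Wa * Wc n hn : SL2R) : Matrix (Fin 2) (Fin 2) ℝ)
    = (1 / √n) • !![-2, (n : ℝ); 1, -n] := by
  rw [coe_mul, Wa, Wc, mul_smul_comm, mul_fin_two]
  congr 1
  ext i j
  fin_cases i <;> fin_cases j <;> simp

lemma coe_Wa_mul_Wb_mul_Wc : ((Wa * Wb n hn * Wc n hn : SL2R) : Matrix (Fin 2) (Fin 2) ℝ)
    = !![1, -((n : ℝ) + 2); 0, 1] := by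
  have hn' : (n : ℝ) ≠ 0 := by positivity
  have hsqrt : √n * (1 / √n) = 1 := by field_simp
  rw [coe_mul, coe_Wa_mul_Wb, Wc, smul_mul_smul_comm, hsqrt, one_smul, mul_fin_two]
  ext i j
  fin_cases i <;> fin_cases j <;> simp <;> field_simp

lemma coe_Wa_mul_Wb_sq : (((Wa * Wb n hn) ^ 2 : SL2R) : Matrix (Fin 2) (Fin 2) ℝ)
    = !![((n : ℝ) ^ 2 + 3 * n + 4) / n, (n : ℝ) + 2; -((n : ℝ) + 2) / n, -1] := by
  have hn' : (n : ℝ) ≠ 0 := by positivity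
  rw [sq, coe_mul, coe_Wa_mul_Wb, smul_mul_smul_comm, Real.mul_self_sqrt n.cast_nonneg,
    mul_fin_two]
  ext i j
  fin_cases i <;> fin_cases j <;> simp <;> field_simp <;> ring

lemma coe_Wa_mul_Wc_sq : (((Wa * Wc n hn) ^ 2 : SL2R) : Matrix (Fin 2) (Fin 2) ℝ)
    = !![((n : ℝ) + 4) / n, -((n : ℝ) + 2); -((n : ℝ) + 2) / n, (n : ℝ) + 1] := by
  have hn' : (n : ℝ) ≠ 0 := by positivity
  have hsqrt : 1 / √n * (1 / √n) = 1 / n := by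
    rw [div_mul_div_comm, one_mul, Real.mul_self_sqrt n.cast_nonneg]
  rw [sq, coe_mul, coe_Wa_mul_Wc, smul_mul_smul_comm, hsqrt, mul_fin_two]
  ext i j
  fin_cases i <;> fin_cases j <;> simp <;> field_simp <;> ring

def Wgamma (k : ℤ) : SL2R :=
  (Wa * Wb n hn * Wc n hn) ^ k * (Wa * Wb n hn) ^ 2 * (Wa * Wc n hn) ^ 2

lemma Wgamma_mem_W (k : ℤ) : Wgamma hn k ∈ W n hn := by
  have hab := mul_mem (Wa_mem_W hn) (Wb_mem_W hn)
  have hac := mul_mem (Wa_mem_W hn) (Wc_mem_W hn)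
  exact mul_mem (mul_mem (zpow_mem (mul_mem hab (Wc_mem_W hn)) k) (pow_mem hab 2)) (pow_mem hac 2)

lemma coe_Wgamma (k : ℤ) : (Wgamma hn k : Matrix (Fin 2) (Fin 2) ℝ) =
    !![(3 * (n : ℝ) ^ 2 + 12 * n + 16 + 4 * k * (n + 2) ^ 2) / n ^ 2,
        -((n : ℝ) + 2) * (2 * (n + 2) + k * (3 * n + 4)) / n;
       -4 * ((n : ℝ) + 2) / n ^ 2, (3 * (n : ℝ) + 4) / n] := by
  have hn' : (n : ℝ) ≠ 0 := by positivity
  rw [Wgamma, coe_mul, coe_mul, coe_zpow_of_coe_eq_shear (coe_Wa_mul_Wb_mul_Wc hn),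
    coe_Wa_mul_Wb_sq, coe_Wa_mul_Wc_sq, mul_fin_two, mul_fin_two]
  ext i j
  fin_cases i <;> fin_cases j <;> simp <;> field_simp <;> ring

end Weierstrass

theorem exists_special_mem_W_eight_mul {m : ℕ} (hm : 0 < m) :
    ∃ γ ∈ W (8 * m) (by positivity), IsHyperbolic γ ∧ ∃ x : ℚ, FixesBoundary γ (x : ℝ) := by
  have hm' : (1 : ℝ) ≤ m := by exact_mod_cast hm
  refine exists_special_of_mulVec_eq (Wgamma_mem_W _ (-(m + 1))) (q := 6 * m)
    (t := -(1 / (4 * m))) ?_ ?_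
  · rw [coe_Wgamma]
    ext i
    fin_cases i <;> simp [mulVec, dotProduct] <;> field_simp <;> ring
  · rw [abs_neg, abs_of_pos (by positivity)]
    refine ne_of_lt ((div_lt_one (by positivity)).mpr ?_)
    linarith

theorem exists_special_mem_W_four_mul_add_two {j : ℕ} (hj : 0 < j) :
    ∃ γ ∈ W (4 * j + 2) (by positivity), IsHyperbolic γ ∧ ∃ x : ℚ, FixesBoundary γ (x : ℝ) := by
  have hj' : (1 : ℝ) ≤ j := by exact_mod_cast hj
  refine exists_special_of_mulVec_eq (Wgamma_mem_W _ (j ^ 2 - 1)) (q := 3 * j + 1)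
    (t := 1 / (2 * j + 1) ^ 2) ?_ ?_
  · rw [coe_Wgamma]
    ext i
    fin_cases i <;> simp [mulVec, dotProduct] <;> field_simp <;> ring
  · rw [abs_of_pos (by positivity)]
    refine ne_of_lt ((div_lt_one (by positivity)).mpr ?_)
    nlinarith

/-- For every `n > 2` with `n ≡ 0, 2, 6 (mod 8)`, the Weierstrass group `W_n`
contains a special element: a hyperbolic element fixing a rational boundary point. -/
theorem weierstrass_contains_special (n : ℕ) (hn : 2 < n)
    (h : n % 8 = 0 ∨ n % 8 = 2 ∨ n % 8 = 6) :
    ∃ γ ∈ W n (by omega), IsHyperbolic γ ∧ ∃ x : ℚ, FixesBoundary γ (x : ℝ) := by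
  obtain ⟨m, rfl⟩ | ⟨j, rfl⟩ : (∃ m, n = 8 * m) ∨ ∃ j, n = 4 * j + 2 := by
    by_cases h8 : n % 8 = 0
    · exact Or.inl ⟨n / 8, by omega⟩
    · exact Or.inr ⟨n / 4, by omega⟩
  · exact exists_special_mem_W_eight_mul (by omega)
  · exact exists_special_mem_W_four_mul_add_two (by omega)
end
end
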